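/- arXiv:2009.11069 — 2 statements merged into one kernel-verified Lean document; each statement's English description precedes it below -/
import Mathlib

section
/- Consider the sequence defined by α⁰ = 0, A⁰ = 0, and for k ≥ 0, α^{k+1} is the greater root of (A^k + α^{k+1})(1 + A^k μ) = L(α^{k+1})², A^{k+1} = A^k + α^{k+1}, with 0 < μ ≤ L. Then for all N ≥ 1, A^N ≥ (1/L)(1 + (1/2)√(μ/L))^{2(N-1)}. -/
/-!
Since `A^k μ ≤ 1 + A^k μ`, the defining relation gives `(α^{k+1})² ≥ s² A^k (A^k + α^{k+1})` with
`s = √(μ/L)`. Solving this quadratic inequality for the positive root yields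
`α^{k+1} ≥ (s + s²/2) A^k`, so `A^{k+1} ≥ (1 + s + s²/2) A^k ≥ (1 + s/2)² A^k`.
Starting from `A¹ = 1/L` (the first relation reads `α¹ = L (α¹)²`), the bound follows by iteration.
-/

lemma add_sq_div_two_mul_le_of_sq_mul_le {s A a : ℝ} (hA : 0 ≤ A) (ha : 0 < a)
    (h : s ^ 2 * A * (A + a) ≤ a ^ 2) : (s + s ^ 2 / 2) * A ≤ a := by
  have h_sq_le : s ^ 2 * A ≤ a := le_of_mul_le_mul_right (by nlinarith) ha
  have h_shift_nonneg : 0 ≤ a - s ^ 2 * A / 2 := by nlinarith [mul_nonneg (sq_nonneg s) hA]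
  -- completing the square: `(a - s²A/2)² ≥ s²A² + s⁴A²/4 ≥ (sA)²`
  have h_square : (s * A) ^ 2 ≤ (a - s ^ 2 * A / 2) ^ 2 := by
    nlinarith [sq_nonneg (s ^ 2 * A)]
  linarith [le_of_sq_le_sq h_square h_shift_nonneg]

lemma one_add_half_sqrt_sq_mul_le {μ L A a : ℝ} (hμ : 0 < μ) (hL : 0 < L) (hA : 0 ≤ A)
    (ha : 0 < a) (h : (A + a) * (1 + A * μ) ≤ L * a ^ 2) :
    (1 + 1 / 2 * √(μ / L)) ^ 2 * A ≤ A + a := by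
  set s := √(μ / L)
  have hμ_eq : μ = s ^ 2 * L := by
    rw [Real.sq_sqrt (div_pos hμ hL).le, div_mul_cancel₀ μ hL.ne']
  have h_quad : s ^ 2 * A * (A + a) ≤ a ^ 2 := by
    refine le_of_mul_le_mul_left ?_ hL
    rw [hμ_eq] at h
    nlinarith
  have h_gain := add_sq_div_two_mul_le_of_sq_mul_le hA ha h_quad
  nlinarith [mul_nonneg (sq_nonneg s) hA]

theorem A_seq_lower_bound_general (μ L : ℝ) (hμ : 0 < μ)
    (α A : ℕ → ℝ) (hA0 : A 0 = 0)
    (hrec : ∀ k, A (k + 1) = A k + α (k + 1))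
    (hroot : ∀ k, (A k + α (k + 1)) * (1 + A k * μ) = L * α (k + 1) ^ 2)
    (hpos : ∀ k, 0 < α (k + 1)) :
    ∀ N : ℕ, 1 ≤ N →
      A N ≥ 1 / L * (1 + 1 / 2 * Real.sqrt (μ / L)) ^ (2 * (N - 1)) := by
  have hLα : L * α 1 = 1 := by
    have h := hroot 0
    simp only [hA0, zero_add, zero_mul, add_zero, mul_one] at h
    exact mul_left_cancel₀ (hpos 0).ne' (by linear_combination -h)
  have hL : 0 < L := pos_of_mul_pos_left (hLα ▸ one_pos) (hpos 0).le
  have hA1 : A 1 = 1 / L := by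
    rw [hrec 0, hA0, zero_add, eq_div_iff hL.ne', mul_comm, hLα]
  have hA_nonneg : ∀ k, 0 ≤ A k := fun k =>
    hA0 ▸ monotone_nat_of_le_succ (fun k => by linarith [hrec k, hpos k]) (Nat.zero_le k)
  intro N hN
  obtain ⟨n, rfl⟩ := Nat.exists_eq_add_of_le' hN
  have h_geom := geom_le (u := fun k => A (k + 1)) (sq_nonneg (1 + 1 / 2 * √(μ / L))) n
    fun k _ => by
      rw [hrec (k + 1)]
      exact one_add_half_sqrt_sq_mul_le hμ hL (hA_nonneg _) (hpos _) (hroot _).le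
  rw [Nat.add_sub_cancel, pow_mul, ← hA1, mul_comm]
  exact h_geom

/-- for the Nesterov coefficient sequence `α⁰ = A⁰ = 0`,
`(A^k + α^{k+1})(1 + A^k μ) = L (α^{k+1})²` with `α^{k+1} > 0` (greater root) and
`A^{k+1} = A^k + α^{k+1}`, one has `A^N ≥ (1/L)(1 + (1/2)√(μ/L))^{2(N-1)}` for `N ≥ 1`. -/
theorem A_seq_lower_bound (μ L : ℝ) (hμ : 0 < μ) (hμL : μ ≤ L)
    (α A : ℕ → ℝ) (hα0 : α 0 = 0) (hA0 : A 0 = 0)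
    (hrec : ∀ k, A (k + 1) = A k + α (k + 1))
    (hroot : ∀ k, (A k + α (k + 1)) * (1 + A k * μ) = L * α (k + 1) ^ 2)
    (hpos : ∀ k, 0 < α (k + 1)) :
    ∀ N : ℕ, 1 ≤ N →
      A N ≥ 1 / L * (1 + 1 / 2 * Real.sqrt (μ / L)) ^ (2 * (N - 1)) :=
  A_seq_lower_bound_general μ L hμ α A hA0 hrec hroot hpos
end

section
/- Consider the sequence defined by α⁰ = 0, A⁰ = 0, and for k ≥ 0, α^{k+1} is the greater root of (A^k + α^{k+1})(1 + A^k μ) = L(α^{k+1})², A^{k+1} = A^k + α^{k+1}, with 0 < μ ≤ L. Then for all k ≥ 1, (Σ_{i=1}^k A^i)/A^k ≤ 1 + √(L/μ). -/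
/-!
Dropping the nonnegative terms `A^k + α^{k+1} + A^k α^{k+1} μ` from the defining equation leaves
`μ (A^k)² ≤ L (α^{k+1})²`, so `A^{k+1} ≥ (1 + c) A^k` with `c = √(μ/L)`. Under such geometric
growth the partial sums are dominated by their last term, `Σ_{i ≤ k} A^i ≤ (1 + 1/c) A^k`, and
`1/c = √(L/μ)`.
-/

open Finset

theorem sqrt_div_mul_le_of_root {μ L a x : ℝ} (hμ : 0 ≤ μ) (hL : 0 < L) (ha : 0 ≤ a)
    (hx : 0 ≤ x) (hroot : (a + x) * (1 + a * μ) = L * x ^ 2) :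
    Real.sqrt (μ / L) * a ≤ x := by
  have hsq : μ * a ^ 2 ≤ L * x ^ 2 := by
    rw [← hroot]
    nlinarith [mul_nonneg (mul_nonneg ha hx) hμ]
  have hsq' : (Real.sqrt (μ / L) * a) ^ 2 ≤ x ^ 2 := by
    rw [mul_pow, Real.sq_sqrt (div_nonneg hμ hL.le), div_mul_eq_mul_div, div_le_iff₀ hL]
    linarith
  exact le_of_pow_le_pow_left₀ two_ne_zero hx hsq'

theorem sum_Icc_le_of_geometric_growth {A : ℕ → ℝ} {c : ℝ} (hc : 0 < c)
    (hgrowth : ∀ k, (1 + c) * A k ≤ A (k + 1)) {m : ℕ} (hm : 0 ≤ A m) :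
    ∀ k, m ≤ k → ∑ i ∈ Icc m k, A i ≤ (1 + c⁻¹) * A k := by
  intro k hk
  induction k, hk using Nat.le_induction with
  | base =>
    rw [Icc_self, sum_singleton]
    nlinarith [inv_pos.2 hc]
  | succ k hk ih =>
    rw [sum_Icc_succ_top (by omega)]
    have : (1 + c⁻¹) * A k ≤ c⁻¹ * A (k + 1) := by
      calc (1 + c⁻¹) * A k = c⁻¹ * ((1 + c) * A k) := by field_simp; ring
        _ ≤ c⁻¹ * A (k + 1) := mul_le_mul_of_nonneg_left (hgrowth k) (inv_pos.2 hc).le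
    linarith

theorem A_seq_sum_ratio_bound_general (μ L : ℝ) (hμ : 0 < μ) (hμL : μ ≤ L)
    (α A : ℕ → ℝ) (hA0 : A 0 = 0)
    (hrec : ∀ k, A (k + 1) = A k + α (k + 1))
    (hroot : ∀ k, (A k + α (k + 1)) * (1 + A k * μ) = L * α (k + 1) ^ 2)
    (hpos : ∀ k, 0 < α (k + 1)) :
    ∀ k : ℕ, 1 ≤ k →
      (∑ i ∈ Finset.Icc 1 k, A i) / A k ≤ 1 + Real.sqrt (L / μ) := by
  have hL : 0 < L := hμ.trans_le hμL
  have hA_nonneg : ∀ k, 0 ≤ A k := by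
    intro k
    induction k with
    | zero => exact hA0.ge
    | succ k ih => rw [hrec]; exact add_nonneg ih (hpos k).le
  have hgrowth : ∀ k, (1 + Real.sqrt (μ / L)) * A k ≤ A (k + 1) := by
    intro k
    have := sqrt_div_mul_le_of_root hμ.le hL (hA_nonneg k) (hpos k).le (hroot k)
    rw [hrec]
    linarith
  intro k hk
  obtain ⟨j, rfl⟩ : ∃ j, k = j + 1 := ⟨k - 1, by omega⟩
  have hA_pos : 0 < A (j + 1) := by
    rw [hrec]; exact add_pos_of_nonneg_of_pos (hA_nonneg j) (hpos j)
  rw [div_le_iff₀ hA_pos, ← inv_div, Real.sqrt_inv]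
  exact sum_Icc_le_of_geometric_growth (Real.sqrt_pos.2 (div_pos hμ hL)) hgrowth
    (hA_nonneg 1) _ hk

/-- for the Nesterov coefficient sequence `α⁰ = A⁰ = 0`,
`(A^k + α^{k+1})(1 + A^k μ) = L (α^{k+1})²` with `α^{k+1} > 0` (greater root) and
`A^{k+1} = A^k + α^{k+1}`, one has `(Σ_{i=1}^k A^i)/A^k ≤ 1 + √(L/μ)` for all `k ≥ 1`. -/
theorem A_seq_sum_ratio_bound (μ L : ℝ) (hμ : 0 < μ) (hμL : μ ≤ L)
    (α A : ℕ → ℝ) (hα0 : α 0 = 0) (hA0 : A 0 = 0)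
    (hrec : ∀ k, A (k + 1) = A k + α (k + 1))
    (hroot : ∀ k, (A k + α (k + 1)) * (1 + A k * μ) = L * α (k + 1) ^ 2)
    (hpos : ∀ k, 0 < α (k + 1)) :
    ∀ k : ℕ, 1 ≤ k →
      (∑ i ∈ Finset.Icc 1 k, A i) / A k ≤ 1 + Real.sqrt (L / μ) :=
  A_seq_sum_ratio_bound_general μ L hμ hμL α A hA0 hrec hroot hpos
end
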